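/- Let h be a basic irreducible divisor of X^n − 1 over ZMod p^a and let P be the ideal of R_a generated by h̄ and the image of the constant polynomial p. Then for every integer i with 1 ≤ i ≤ a, the i-th power P^i equals the ideal of R_a generated by h̄ and the image of p^i. In particular P^a is the principal ideal generated by h̄. -/

import Mathlib

/-!
Write `X^n - 1 = h g`. Since `p ∤ n`, `X^n - 1` is separable mod `p`, so `h` and `g` are coprime
mod `p`: `u h + v g = 1 + p w` for some polynomials `u, v, w`. Multiplying by `h` and using
`h g = X^n - 1 = 0` in `R_a` gives `h = (u h - p w) h` with `u h - p w ∈ P`, so `h ∈ P^i` for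
every `i`. Hence `P^i = (h) + (p)^i = (h, p^i)`, and `p^a = 0` gives `P^a = (h)`.
-/

open Polynomial

/-- The quotient ring `(ZMod p^a)[X]/(X^n - 1)`. -/
abbrev Rquot (p a n : ℕ) :=
  Polynomial (ZMod (p ^ a)) ⧸ Ideal.span {(X : Polynomial (ZMod (p ^ a))) ^ n - 1}

/-- The natural quotient map `(ZMod p^a)[X] → (ZMod p^a)[X]/(X^n - 1)`. -/
noncomputable abbrev rmk (p a n : ℕ) : Polynomial (ZMod (p ^ a)) →+* Rquot p a n :=
  Ideal.Quotient.mk _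

/-- A basic irreducible divisor of `X^n - 1` over `ZMod p^a`: a monic divisor of `X^n - 1`
whose coefficientwise reduction modulo `p` is irreducible. -/
def BasicIrr (p a n : ℕ) [Fact p.Prime] (ha : a ≠ 0) (h : Polynomial (ZMod (p ^ a))) : Prop :=
  h.Monic ∧ h ∣ (X ^ n - 1) ∧
    Irreducible (h.map (ZMod.castHom (dvd_pow_self p ha) (ZMod p)))

namespace Ideal

variable {R : Type*} [CommRing R]

theorem sup_pow_le_sup_pow_right (I J : Ideal R) (i : ℕ) : (I ⊔ J) ^ i ≤ I ⊔ J ^ i := by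
  induction i with
  | zero => simp
  | succ k ih =>
    calc (I ⊔ J) ^ (k + 1) ≤ (I ⊔ J ^ k) * (I ⊔ J) := by rw [pow_succ]; gcongr
      _ ≤ I ⊔ J ^ (k + 1) := by
        rw [mul_sup, sup_mul, sup_mul, pow_succ]
        exact sup_le (sup_le (le_sup_of_le_left mul_le_right) (le_sup_of_le_left mul_le_right))
          (sup_le (le_sup_of_le_left mul_le_left) le_sup_right)

theorem sup_pow_eq_of_le_mul {I J : Ideal R} (hI : I ≤ (I ⊔ J) * I) (i : ℕ) :
    (I ⊔ J) ^ i = I ⊔ J ^ i := by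
  have hIpow : ∀ k, I ≤ (I ⊔ J) ^ k * I := by
    intro k
    induction k with
    | zero => simp
    | succ k ih =>
      calc I ≤ (I ⊔ J) ^ k * ((I ⊔ J) * I) := ih.trans (mul_mono_right hI)
        _ = (I ⊔ J) ^ (k + 1) * I := by rw [pow_succ, mul_assoc]
  exact le_antisymm (sup_pow_le_sup_pow_right I J i)
    (sup_le ((hIpow i).trans mul_le_left) (pow_right_mono le_sup_right i))

theorem span_pair_pow_eq_of_mul_eq_zero {h g u v r w : R} (hhg : h * g = 0)
    (hbez : u * h + v * g = 1 + r * w) (i : ℕ) :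
    span {h, r} ^ i = span {h, r ^ i} := by
  have hfix : h = (u * h - r * w) * h := by linear_combination (-h) * hbez + v * hhg
  have hle : span {h} ≤ (span {h} ⊔ span {r}) * span {h} := by
    have hmem : (u * h - r * w) * h ∈ span {h, r} * span {h} :=
      mul_mem_mul (sub_mem (mul_mem_left _ _ (subset_span (by simp)))
        (mul_mem_right _ _ (subset_span (by simp)))) (mem_span_singleton_self h)
    rw [span_singleton_le_iff_mem, ← span_insert]
    rwa [← hfix] at hmem
  rw [span_insert, sup_pow_eq_of_le_mul hle, span_singleton_pow, ← span_insert]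

end Ideal

theorem ZMod.ker_castHom {m n : ℕ} (hmn : m ∣ n) :
    RingHom.ker (ZMod.castHom hmn (ZMod m)) = Ideal.span {(m : ZMod n)} := by
  ext x
  obtain ⟨z, rfl⟩ := ZMod.intCast_surjective x
  rw [RingHom.mem_ker, map_intCast, ZMod.intCast_zmod_eq_zero_iff_dvd, Ideal.mem_span_singleton]
  constructor
  · rintro ⟨k, rfl⟩
    exact ⟨k, by push_cast; rfl⟩
  · rintro ⟨y, hy⟩
    obtain ⟨k, rfl⟩ := ZMod.intCast_surjective y
    have hsub : ((z - m * k : ℤ) : ZMod n) = 0 := by push_cast; rw [hy]; ring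
    rw [ZMod.intCast_zmod_eq_zero_iff_dvd] at hsub
    simpa using dvd_add ((Int.natCast_dvd_natCast.mpr hmn).trans hsub) (dvd_mul_right (m : ℤ) k)

theorem Polynomial.isCoprime_map_of_mul_eq_X_pow_sub_one {R K : Type*} [CommRing R] [Field K]
    (φ : R →+* K) {h g : R[X]} {n : ℕ} (hhg : h * g = X ^ n - 1) (hn : (n : K) ≠ 0) :
    IsCoprime (h.map φ) (g.map φ) := by
  apply Separable.isCoprime
  rwa [← Polynomial.map_mul, hhg, Polynomial.map_sub, Polynomial.map_pow, map_X,
    Polynomial.map_one, X_pow_sub_one_separable_iff]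

theorem Polynomial.exists_mul_add_mul_sub_one_mem_of_isCoprime_map {R S : Type*} [CommRing R]
    [CommRing S] {φ : R →+* S} (hφ : Function.Surjective φ) {f g : R[X]}
    (hfg : IsCoprime (f.map φ) (g.map φ)) :
    ∃ u v : R[X], u * f + v * g - 1 ∈ (RingHom.ker φ).map C := by
  obtain ⟨u', v', huv⟩ := hfg
  obtain ⟨u, rfl⟩ := map_surjective φ hφ u'
  obtain ⟨v, rfl⟩ := map_surjective φ hφ v'
  refine ⟨u, v, ?_⟩
  rw [← ker_mapRingHom, RingHom.mem_ker, coe_mapRingHom]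
  simp [Polynomial.map_mul, huv]

theorem stmt13_general (p : ℕ) [Fact p.Prime] (a n : ℕ) (ha : 0 < a) (hpn : ¬ p ∣ n)
    (h : Polynomial (ZMod (p ^ a))) (hh : BasicIrr p a n ha.ne' h) :
    (∀ i : ℕ, 1 ≤ i → i ≤ a →
      (Ideal.span {rmk p a n h, rmk p a n (C (p : ZMod (p ^ a)))}) ^ i =
        Ideal.span {rmk p a n h, rmk p a n (C ((p : ZMod (p ^ a)) ^ i))}) ∧
    (Ideal.span {rmk p a n h, rmk p a n (C (p : ZMod (p ^ a)))}) ^ a =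
      Ideal.span {rmk p a n h} := by
  obtain ⟨-, ⟨g, hhg⟩, -⟩ := hh
  set φ := ZMod.castHom (dvd_pow_self p ha.ne') (ZMod p)
  have hn : (n : ZMod p) ≠ 0 := by simpa [ZMod.natCast_eq_zero_iff] using hpn
  obtain ⟨u, v, huv⟩ := exists_mul_add_mul_sub_one_mem_of_isCoprime_map
    (ZMod.ringHom_surjective φ) (isCoprime_map_of_mul_eq_X_pow_sub_one φ hhg.symm hn)
  rw [ZMod.ker_castHom, Ideal.map_span, Set.image_singleton, Ideal.mem_span_singleton'] at huv
  obtain ⟨w, hw⟩ := huv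
  have hpow : ∀ i, (Ideal.span {rmk p a n h, rmk p a n (C (p : ZMod (p ^ a)))}) ^ i =
      Ideal.span {rmk p a n h, rmk p a n (C ((p : ZMod (p ^ a)) ^ i))} := by
    intro i
    rw [C_pow, map_pow]
    refine Ideal.span_pair_pow_eq_of_mul_eq_zero (g := rmk p a n g) (u := rmk p a n u)
      (v := rmk p a n v) (w := rmk p a n w) ?_ ?_ i
    · rw [← map_mul, ← hhg]
      exact Ideal.Quotient.eq_zero_iff_mem.mpr (Ideal.mem_span_singleton_self _)
    · simp only [← map_mul, ← map_add, ← map_one (rmk p a n)]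
      congr 1
      linear_combination -hw
  refine ⟨fun i _ _ => hpow i, ?_⟩
  rw [hpow a, ← Nat.cast_pow, ZMod.natCast_self, C_0, map_zero, Ideal.span_pair_zero]

theorem stmt13 (p : ℕ) [Fact p.Prime] (a n : ℕ) (ha : 0 < a) (hn : 0 < n) (hpn : ¬ p ∣ n)
    (h : Polynomial (ZMod (p ^ a))) (hh : BasicIrr p a n ha.ne' h) :
    (∀ i : ℕ, 1 ≤ i → i ≤ a →
      (Ideal.span {rmk p a n h, rmk p a n (C (p : ZMod (p ^ a)))}) ^ i =
        Ideal.span {rmk p a n h, rmk p a n (C ((p : ZMod (p ^ a)) ^ i))}) ∧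
    (Ideal.span {rmk p a n h, rmk p a n (C (p : ZMod (p ^ a)))}) ^ a =
      Ideal.span {rmk p a n h} :=
  stmt13_general p a n ha hpn h hh
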